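/- arXiv:gr-qc/0102079 — 4 statements merged into one kernel-verified Lean document; each statement's English description precedes it below -/
import Mathlib

section
/- For parameters λ > 0 and 0 ≤ δ ≤ δ_s(λ) := 2(1 + √(1 + 1/λ²)), set α = −1 + δ/2 and β = √(1/λ² + δ − δ²/4). Then for every real t with 0 ≤ t² ≤ 1, G(it)·(1/λ² + δ t²) = (√((t² + α)² + β²) + 1 − t²)², where G(τ) = (√((τ² − α)² + β²) + τ² + 1)/(√((τ² − α)² + β²) − (τ² + 1)); equivalently, for 0 ≤ s ≤ 1, ln G(i√s) = 2 ln(√((s + α)² + β²) + 1 − s) − ln(1/λ² + δ s). -/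
/-- For `λ > 0`, `0 ≤ δ ≤ δ_s(λ) = 2(1 + √(1 + 1/λ²))`, `α = −1 + δ/2`,
`β = √(1/λ² + δ − δ²/4)`: for every real `t` with `0 ≤ t² ≤ 1`,
`G(it)·(1/λ² + δt²) = (√((t² + α)² + β²) + 1 − t²)²`, where
`G(τ) = (√((τ² − α)² + β²) + τ² + 1)/(√((τ² − α)² + β²) − (τ² + 1))`
evaluated at `τ = it`, i.e. `τ² = −t²`; equivalently, for `0 ≤ s ≤ 1`,
`ln G(i√s) = 2 ln(√((s + α)² + β²) + 1 − s) − ln(1/λ² + δs)`. -/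
theorem stmt2 (lam δ α β : ℝ) (hlam : 0 < lam) (hδ0 : 0 ≤ δ)
    (hδs : δ ≤ 2*(1 + Real.sqrt (1 + 1/lam^2)))
    (hα : α = -1 + δ/2) (hβ : β = Real.sqrt (1/lam^2 + δ - δ^2/4)) :
    (∀ t : ℝ, t^2 ≤ 1 →
      (Real.sqrt ((-t^2 - α)^2 + β^2) + (-t^2) + 1) /
          (Real.sqrt ((-t^2 - α)^2 + β^2) - ((-t^2) + 1)) * (1/lam^2 + δ*t^2)
        = (Real.sqrt ((t^2 + α)^2 + β^2) + 1 - t^2)^2) ∧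
    (∀ s : ℝ, 0 ≤ s → s ≤ 1 →
      Real.log ((Real.sqrt ((-s - α)^2 + β^2) + (-s) + 1) /
          (Real.sqrt ((-s - α)^2 + β^2) - ((-s) + 1)))
        = 2 * Real.log (Real.sqrt ((s + α)^2 + β^2) + 1 - s)
          - Real.log (1/lam^2 + δ*s)) := by
  have hl2 : (0:ℝ) < 1/lam^2 := by positivity
  have hβnn : 0 ≤ 1/lam^2 + δ - δ^2/4 := by
    set r := Real.sqrt (1 + 1/lam^2) with hr
    have h1 : r ^ 2 = 1 + 1/lam^2 := Real.sq_sqrt (by positivity)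
    have hr0 : 0 ≤ r := Real.sqrt_nonneg _
    have hr1 : (1:ℝ) ≤ r := by nlinarith
    nlinarith [mul_nonneg (by linarith : (0:ℝ) ≤ 2*(1+r) - δ)
      (by linarith : (0:ℝ) ≤ δ - 2 + 2*r)]
  have hβ2 : β^2 = 1/lam^2 + δ - δ^2/4 := by rw [hβ, Real.sq_sqrt hβnn]
  have key : ∀ u : ℝ, 0 ≤ u → u ≤ 1 →
      (Real.sqrt ((-u - α)^2 + β^2) + (-u) + 1) /
          (Real.sqrt ((-u - α)^2 + β^2) - ((-u) + 1)) * (1/lam^2 + δ*u)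
        = (Real.sqrt ((u + α)^2 + β^2) + 1 - u)^2 := by
    intro u hu0 hu1
    have hE : (-u - α)^2 = (u + α)^2 := by ring
    rw [hE]
    set S := Real.sqrt ((u + α)^2 + β^2) with hSdef
    have hS2 : S^2 = (u + α)^2 + β^2 := Real.sq_sqrt (by positivity)
    have hSnn : 0 ≤ S := Real.sqrt_nonneg _
    have hprod : (S + 1 - u) * (S - 1 + u) = 1/lam^2 + δ*u := by
      subst hα
      linear_combination hS2 + hβ2
    have hDpos : 0 < 1/lam^2 + δ*u := by positivity
    have hPpos : 0 < (S + 1 - u) * (S - 1 + u) := by rw [hprod]; exact hDpos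
    have hNnn : 0 ≤ S + 1 - u := by linarith
    have hNpos : 0 < S + 1 - u := by
      rcases lt_or_eq_of_le hNnn with h | h
      · exact h
      · rw [← h, zero_mul] at hPpos; exact absurd hPpos (lt_irrefl 0)
    have hdpos : 0 < S - 1 + u := by
      by_contra h
      push_neg at h
      have := mul_nonpos_of_nonneg_of_nonpos hNpos.le h
      linarith
    rw [show S + -u + 1 = S + 1 - u from by ring,
        show S - (-u + 1) = S - 1 + u from by ring,
        div_mul_eq_mul_div, div_eq_iff (ne_of_gt hdpos)]
    linear_combination (-(S + 1 - u)) * hprod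
  refine ⟨fun t ht => key (t^2) (sq_nonneg t) ht, fun s hs0 hs1 => ?_⟩
  have h := key s hs0 hs1
  have hE : (-s - α)^2 = (s + α)^2 := by ring
  rw [hE] at h ⊢
  set S := Real.sqrt ((s + α)^2 + β^2) with hSdef
  have hS2 : S^2 = (s + α)^2 + β^2 := Real.sq_sqrt (by positivity)
  have hSnn : 0 ≤ S := Real.sqrt_nonneg _
  have hprod : (S + 1 - s) * (S - 1 + s) = 1/lam^2 + δ*s := by
    subst hα
    linear_combination hS2 + hβ2
  have hDpos : 0 < 1/lam^2 + δ*s := by positivity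
  have hPpos : 0 < (S + 1 - s) * (S - 1 + s) := by rw [hprod]; exact hDpos
  have hNnn : 0 ≤ S + 1 - s := by linarith
  have hNpos : 0 < S + 1 - s := by
    rcases lt_or_eq_of_le hNnn with hh | hh
    · exact hh
    · rw [← hh, zero_mul] at hPpos; exact absurd hPpos (lt_irrefl 0)
  have hratio : (S + (-s) + 1) / (S - (-s + 1))
      = (S + 1 - s)^2 / (1/lam^2 + δ*s) := by
    rw [eq_div_iff (ne_of_gt hDpos)]
    exact h
  rw [hratio, Real.log_div (pow_ne_zero 2 (ne_of_gt hNpos)) (ne_of_gt hDpos),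
      Real.log_pow]
  push_cast
  ring
end

section
/- Let λ > 0 and 0 < δ < δ_s(λ) := 2(1 + √(1 + 1/λ²)), and set α = −1 + δ/2. For Y > δ define b²(Y) = (2/(Y − δ)²)·(δα − 1/λ² − (δ/2)Y + √(1/λ² + δ)·√(Y² − δY + 1/λ² + δ)). Then lim_{Y → ∞} Y·b²(Y) = 2(√(1/λ² + δ) − δ/2); in particular, since the theta quotient Y diverges as (1 − ρ²)^{−3/2} at the rim ρ → 1 of the disk, b² vanishes there like (1 − ρ²)³ in the non-static case. -/
/-! Dividing numerator and denominator by `Y²`, the quantity `Y·b²(Y)` becomes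
`2 (Y/(Y-δ))² (k/Y - δ/2 + √(1/λ² + δ) · √(Y² - δY + 1/λ² + δ)/Y)` with `k` constant,
and `√(Y² + pY + q)/Y → 1`. -/

open Filter Topology

lemma tendsto_self_div_sub_const_atTop (a : ℝ) :
    Tendsto (fun Y : ℝ => Y / (Y - a)) atTop (𝓝 1) := by
  have h : Tendsto (fun Y : ℝ => (1 - a * Y⁻¹)⁻¹) atTop (𝓝 (1 - a * 0)⁻¹) :=
    (tendsto_const_nhds.sub (tendsto_inv_atTop_zero.const_mul a)).inv₀ (by simp)
  rw [mul_zero, sub_zero, inv_one] at h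
  refine h.congr' ?_
  filter_upwards [eventually_gt_atTop 0, eventually_gt_atTop a] with Y hY hYa
  field_simp [sub_ne_zero.mpr hYa.ne']

lemma tendsto_sqrt_quadratic_div_self_atTop (p q : ℝ) :
    Tendsto (fun Y : ℝ => √(Y ^ 2 + p * Y + q) / Y) atTop (𝓝 1) := by
  have h : Tendsto (fun Y : ℝ => √(1 + p * Y⁻¹ + q * Y⁻¹ ^ 2)) atTop (𝓝 √(1 + p * 0 + q * 0 ^ 2)) :=
    (((tendsto_const_nhds.add (tendsto_inv_atTop_zero.const_mul p)).add
      ((tendsto_inv_atTop_zero.pow 2).const_mul q))).sqrt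
  simp only [mul_zero, add_zero, ne_eq, OfNat.ofNat_ne_zero, not_false_eq_true, zero_pow,
    Real.sqrt_one] at h
  refine h.congr' ?_
  filter_upwards [eventually_gt_atTop 0] with Y hY
  have hquad : 1 + p * Y⁻¹ + q * Y⁻¹ ^ 2 = (Y ^ 2 + p * Y + q) / Y ^ 2 := by
    field_simp
  rw [hquad, Real.sqrt_div' _ (sq_nonneg Y), Real.sqrt_sq hY.le]

lemma tendsto_mul_quadratic_sqrt_div_sq_atTop (a k m s p q : ℝ) :
    Tendsto (fun Y : ℝ => Y * (k + m * Y + s * √(Y ^ 2 + p * Y + q)) / (Y - a) ^ 2)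
      atTop (𝓝 (m + s)) := by
  have h : Tendsto (fun Y : ℝ => (Y / (Y - a)) ^ 2 * (k * Y⁻¹ + m + s * (√(Y ^ 2 + p * Y + q) / Y)))
      atTop (𝓝 (1 ^ 2 * (k * 0 + m + s * 1))) :=
    ((tendsto_self_div_sub_const_atTop a).pow 2).mul
      (((tendsto_inv_atTop_zero.const_mul k).add_const m).add
        ((tendsto_sqrt_quadratic_div_self_atTop p q).const_mul s))
  rw [one_pow, one_mul, mul_zero, zero_add, mul_one] at h
  refine h.congr' ?_
  filter_upwards [eventually_gt_atTop 0, eventually_gt_atTop a] with Y hY hYa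
  field_simp [sub_ne_zero.mpr hYa.ne']

theorem stmt11_general (lam δ α : ℝ) :
    Filter.Tendsto
      (fun Y : ℝ => Y * ((2/(Y - δ)^2) *
        (δ*α - 1/lam^2 - (δ/2)*Y
          + Real.sqrt (1/lam^2 + δ) * Real.sqrt (Y^2 - δ*Y + 1/lam^2 + δ))))
      Filter.atTop (nhds (2*(Real.sqrt (1/lam^2 + δ) - δ/2))) := by
  have h := (tendsto_mul_quadratic_sqrt_div_sq_atTop δ (δ * α - 1 / lam ^ 2) (-(δ / 2))
    √(1 / lam ^ 2 + δ) (-δ) (1 / lam ^ 2 + δ)).const_mul 2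
  convert h using 2 with Y
  · have hquad : Y ^ 2 - δ * Y + 1 / lam ^ 2 + δ = Y ^ 2 + -δ * Y + (1 / lam ^ 2 + δ) := by ring
    rw [hquad]
    ring
  · ring

/-- Let `λ > 0`, `0 < δ < δ_s(λ) = 2(1 + √(1 + 1/λ²))`, `α = −1 + δ/2`.
For `Y > δ` define
`b²(Y) = (2/(Y − δ)²)·(δα − 1/λ² − (δ/2)Y + √(1/λ² + δ)·√(Y² − δY + 1/λ² + δ))`.
Then `lim_{Y → ∞} Y·b²(Y) = 2(√(1/λ² + δ) − δ/2)`; in particular, since the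
theta quotient `Y` diverges as `(1 − ρ²)^{−3/2}` at the rim `ρ → 1` of the
disk, `b²` vanishes there like `(1 − ρ²)³` in the non-static case. -/
theorem stmt11 (lam δ α : ℝ) (hlam : 0 < lam) (hδ0 : 0 < δ)
    (hδs : δ < 2*(1 + Real.sqrt (1 + 1/lam^2)))
    (hα : α = -1 + δ/2) :
    Filter.Tendsto
      (fun Y : ℝ => Y * ((2/(Y - δ)^2) *
        (δ*α - 1/lam^2 - (δ/2)*Y
          + Real.sqrt (1/lam^2 + δ) * Real.sqrt (Y^2 - δ*Y + 1/lam^2 + δ))))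
      Filter.atTop (nhds (2*(Real.sqrt (1/lam^2 + δ) - δ/2))) :=
  stmt11_general lam δ α
end

section
/- Let m > 0 and define, for ρ > 0 and (ρ, ζ) with r = √(ρ² + ζ²) and r² ≠ mρ, the complex function f(ρ, ζ) = (ρ² + ζ² + m(iζ − r))/(ρ² + ζ² + m(iζ + r)). Then f satisfies the stationary axisymmetric Ernst equation: (Re f)·(∂²f/∂ρ² + ∂²f/∂ζ² + (1/ρ)∂f/∂ρ) = (∂f/∂ρ)² + (∂f/∂ζ)². -/
/-!
The potential is the Cayley transform `f = (u - 1) / (u + 1)` of `u = r / m + i ζ / r`.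
Writing `Δ = ∂ρρ + ∂ζζ + ρ⁻¹ ∂ρ` and `(∇u)² = u_ρ² + u_ζ²`, the chain rule
`f' = 2u' / (u + 1)²`, `f'' = 2u'' / (u + 1)² - 4u'² / (u + 1)³` and
`Re f = (|u|² - 1) / |u + 1|²` turn the Ernst equation for `f` into
`(|u|² - 1) Δu = 2 ū (∇u)²`. For this `u` one computes `Δu = 2 ū / r²` and
`(∇u)² = 1 / m² - ρ² / r⁴`, and `(|u|² - 1) / r² = 1 / m² - ρ² / r⁴` because `r² = ρ² + ζ²`.
-/

open Complex ComplexConjugate Filter Topology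

noncomputable section

def cayley (w : ℂ) : ℂ := (w - 1) / (w + 1)

theorem ofReal_re_cayley {w : ℂ} (hw : w + 1 ≠ 0) :
    ((cayley w).re : ℂ) = (w * conj w - 1) / ((w + 1) * (conj w + 1)) := by
  have hw' : conj w + 1 ≠ 0 := by simpa using (map_ne_zero conj).2 hw
  rw [re_eq_add_conj, cayley, map_div₀, map_sub, map_add, map_one]
  field_simp
  ring

theorem hasDerivAt_cayley_comp {u : ℝ → ℂ} {u' : ℂ} {t : ℝ} (hu : HasDerivAt u u' t)
    (hne : u t + 1 ≠ 0) : HasDerivAt (fun s => cayley (u s)) (2 * u' / (u t + 1) ^ 2) t := by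
  refine ((hu.sub_const 1).div (hu.add_const 1) hne).congr_deriv ?_
  field_simp
  ring

theorem deriv_deriv_cayley_comp {u u' : ℝ → ℂ} {u'' : ℂ} {t : ℝ}
    (hu : ∀ᶠ s in 𝓝 t, HasDerivAt u (u' s) s) (hu' : HasDerivAt u' u'' t) (hne : u t + 1 ≠ 0) :
    deriv (fun s => deriv (fun s' => cayley (u s')) s) t =
      2 * u'' / (u t + 1) ^ 2 - 4 * u' t ^ 2 / (u t + 1) ^ 3 := by
  have hne' : ∀ᶠ s in 𝓝 t, u s + 1 ≠ 0 :=
    (hu.self_of_nhds.continuousAt.add continuousAt_const).eventually_ne hne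
  have hderiv : (fun s => deriv (fun s' => cayley (u s')) s) =ᶠ[𝓝 t]
      fun s => 2 * u' s / (u s + 1) ^ 2 := by
    filter_upwards [hu, hne'] with s hs hs'
    exact (hasDerivAt_cayley_comp hs hs').deriv
  rw [hderiv.deriv_eq]
  refine ((hu'.const_mul 2).div ((hu.self_of_nhds.add_const 1).fun_pow 2)
    (pow_ne_zero 2 hne)).deriv.trans ?_
  field_simp
  ring

theorem ernst_cayley_of_ernstXi {w w₁ w₁₁ w₂ w₂₂ ρ : ℂ} (hw : w + 1 ≠ 0)
    (h : (w * conj w - 1) * (w₁₁ + w₂₂ + w₁ / ρ) = 2 * conj w * (w₁ ^ 2 + w₂ ^ 2)) :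
    ((cayley w).re : ℂ) * (2 * w₁₁ / (w + 1) ^ 2 - 4 * w₁ ^ 2 / (w + 1) ^ 3
      + (2 * w₂₂ / (w + 1) ^ 2 - 4 * w₂ ^ 2 / (w + 1) ^ 3) + 2 * w₁ / (w + 1) ^ 2 / ρ)
      = (2 * w₁ / (w + 1) ^ 2) ^ 2 + (2 * w₂ / (w + 1) ^ 2) ^ 2 := by
  have hw' : conj w + 1 ≠ 0 := by simpa using (map_ne_zero conj).2 hw
  rw [ofReal_re_cayley hw]
  calc _ = ((w * conj w - 1) * (w₁₁ + w₂₂ + w₁ / ρ) * 2 * (w + 1)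
          - 4 * (w * conj w - 1) * (w₁ ^ 2 + w₂ ^ 2)) / ((w + 1) ^ 4 * (conj w + 1)) := by
        field_simp
        ring
    _ = _ := by
        rw [h]
        field_simp
        ring

theorem HasDerivAt.ofReal_add_ofReal_mul_I {a b : ℝ → ℝ} {a' b' t : ℝ} (ha : HasDerivAt a a' t)
    (hb : HasDerivAt b b' t) :
    HasDerivAt (fun s => (a s : ℂ) + (b s : ℂ) * I) ((a' : ℂ) + (b' : ℂ) * I) t :=
  ha.ofReal_comp.add (hb.ofReal_comp.mul_const I)

def radius (x y : ℝ) : ℝ := √(x ^ 2 + y ^ 2)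

theorem radius_comm (x y : ℝ) : radius x y = radius y x := by
  rw [radius, radius, add_comm]

theorem sq_radius (x y : ℝ) : radius x y ^ 2 = x ^ 2 + y ^ 2 :=
  Real.sq_sqrt (by positivity)

theorem radius_pos {x : ℝ} (hx : x ≠ 0) (y : ℝ) : 0 < radius x y :=
  Real.sqrt_pos.2 (by positivity)

theorem hasDerivAt_radius_fst {x y : ℝ} (h : 0 < radius x y) :
    HasDerivAt (fun s => radius s y) (x / radius x y) x := by
  have h' : x ^ 2 + y ^ 2 ≠ 0 := by rw [← sq_radius]; positivity
  refine (((hasDerivAt_pow 2 x).add_const (y ^ 2)).sqrt h').congr_deriv ?_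
  rw [← radius]
  field_simp
  ring

theorem hasDerivAt_radius_snd {x y : ℝ} (h : 0 < radius x y) :
    HasDerivAt (fun s => radius x s) (y / radius x y) y := by
  simp only [radius_comm x] at h ⊢
  exact hasDerivAt_radius_fst h

/-- Ernst's `ξ` of the extreme Kerr potential, `f = (ξ - 1) / (ξ + 1)`; in spherical coordinates
`ξ = r / m + i cos θ`. -/
def kerrU (m x y : ℝ) : ℂ := ((radius x y / m : ℝ) : ℂ) + ((y / radius x y : ℝ) : ℂ) * I

def kerrUρ (m x y : ℝ) : ℂ :=
  ((x / (m * radius x y) : ℝ) : ℂ) + ((-(x * y) / radius x y ^ 3 : ℝ) : ℂ) * I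

def kerrUρρ (m x y : ℝ) : ℂ :=
  ((y ^ 2 / (m * radius x y ^ 3) : ℝ) : ℂ)
    + ((y * (2 * x ^ 2 - y ^ 2) / radius x y ^ 5 : ℝ) : ℂ) * I

def kerrUζ (m x y : ℝ) : ℂ :=
  ((y / (m * radius x y) : ℝ) : ℂ) + ((x ^ 2 / radius x y ^ 3 : ℝ) : ℂ) * I

def kerrUζζ (m x y : ℝ) : ℂ :=
  ((x ^ 2 / (m * radius x y ^ 3) : ℝ) : ℂ) + ((-3 * x ^ 2 * y / radius x y ^ 5 : ℝ) : ℂ) * I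

variable {m x y : ℝ}

theorem hasDerivAt_kerrU_fst (h : 0 < radius x y) :
    HasDerivAt (fun s => kerrU m s y) (kerrUρ m x y) x := by
  have hR := hasDerivAt_radius_fst h
  have ha : HasDerivAt (fun s => radius s y / m) (x / (m * radius x y)) x :=
    (hR.div_const m).congr_deriv (by field_simp)
  have hb : HasDerivAt (fun s => y / radius s y) (-(x * y) / radius x y ^ 3) x :=
    ((hasDerivAt_const x y).div hR h.ne').congr_deriv (by field_simp; ring)
  exact ha.ofReal_add_ofReal_mul_I hb

theorem hasDerivAt_kerrUρ_fst (hm : m ≠ 0) (h : 0 < radius x y) :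
    HasDerivAt (fun s => kerrUρ m s y) (kerrUρρ m x y) x := by
  have hR := hasDerivAt_radius_fst h
  have ha : HasDerivAt (fun s => s / (m * radius s y)) (y ^ 2 / (m * radius x y ^ 3)) x := by
    refine ((hasDerivAt_id' (x := x)).div (hR.const_mul m) (by positivity)).congr_deriv ?_
    field_simp
    linear_combination sq_radius x y
  have hb : HasDerivAt (fun s => -(s * y) / radius s y ^ 3)
      (y * (2 * x ^ 2 - y ^ 2) / radius x y ^ 5) x := by
    refine (((hasDerivAt_id' (x := x)).mul_const y).fun_neg.div (hR.fun_pow 3)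
      (by positivity)).congr_deriv ?_
    field_simp
    linear_combination -y * radius x y ^ 2 * sq_radius x y
  exact ha.ofReal_add_ofReal_mul_I hb

theorem hasDerivAt_kerrU_snd (h : 0 < radius x y) :
    HasDerivAt (fun s => kerrU m x s) (kerrUζ m x y) y := by
  have hR := hasDerivAt_radius_snd h
  have ha : HasDerivAt (fun s => radius x s / m) (y / (m * radius x y)) y :=
    (hR.div_const m).congr_deriv (by field_simp)
  have hb : HasDerivAt (fun s => s / radius x s) (x ^ 2 / radius x y ^ 3) y := by
    refine ((hasDerivAt_id' (x := y)).div hR h.ne').congr_deriv ?_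
    field_simp
    linear_combination sq_radius x y
  exact ha.ofReal_add_ofReal_mul_I hb

theorem hasDerivAt_kerrUζ_snd (hm : m ≠ 0) (h : 0 < radius x y) :
    HasDerivAt (fun s => kerrUζ m x s) (kerrUζζ m x y) y := by
  have hR := hasDerivAt_radius_snd h
  have ha : HasDerivAt (fun s => s / (m * radius x s)) (x ^ 2 / (m * radius x y ^ 3)) y := by
    refine ((hasDerivAt_id' (x := y)).div (hR.const_mul m) (by positivity)).congr_deriv ?_
    field_simp
    linear_combination sq_radius x y
  have hb : HasDerivAt (fun s => x ^ 2 / radius x s ^ 3) (-3 * x ^ 2 * y / radius x y ^ 5) y := by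
    refine ((hasDerivAt_const y (x ^ 2)).div (hR.fun_pow 3) (by positivity)).congr_deriv ?_
    field_simp
    ring
  exact ha.ofReal_add_ofReal_mul_I hb

theorem kerrU_add_one_ne_zero (hm : 0 < m) (h : 0 < radius x y) : kerrU m x y + 1 ≠ 0 := by
  intro h0
  have hre := congrArg re h0
  simp only [kerrU, add_re, ofReal_re, mul_re, I_re, mul_zero, ofReal_im, I_im,
    one_re, zero_re] at hre
  have : 0 < radius x y / m + 1 := by positivity
  linarith

theorem kerr_eq_cayley (hm : m ≠ 0) (h : 0 < radius x y) :
    (((x ^ 2 + y ^ 2 : ℝ) : ℂ) + (m : ℂ) * (I * (y : ℂ) - (√(x ^ 2 + y ^ 2) : ℂ))) /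
      (((x ^ 2 + y ^ 2 : ℝ) : ℂ) + (m : ℂ) * (I * (y : ℂ) + (√(x ^ 2 + y ^ 2) : ℂ)))
      = cayley (kerrU m x y) := by
  have hr : (radius x y : ℂ) ≠ 0 := ofReal_ne_zero.2 h.ne'
  have hm' : (m : ℂ) ≠ 0 := ofReal_ne_zero.2 hm
  have hr2 : ((x ^ 2 + y ^ 2 : ℝ) : ℂ) = (radius x y : ℂ) ^ 2 := by
    rw [← sq_radius]; push_cast; ring
  have hnum : (radius x y : ℂ) ^ 2 + m * (I * y - radius x y)
      = m * radius x y * (kerrU m x y - 1) := by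
    simp only [kerrU]; push_cast; field_simp; ring
  have hden : (radius x y : ℂ) ^ 2 + m * (I * y + radius x y)
      = m * radius x y * (kerrU m x y + 1) := by
    simp only [kerrU]; push_cast; field_simp; ring
  rw [hr2, ← radius, hnum, hden, mul_div_mul_left _ _ (mul_ne_zero hm' hr), cayley]

theorem kerrU_ernstXi (hm : m ≠ 0) (hx : x ≠ 0) :
    (kerrU m x y * conj (kerrU m x y) - 1) * (kerrUρρ m x y + kerrUζζ m x y + kerrUρ m x y / x)
      = 2 * conj (kerrU m x y) * (kerrUρ m x y ^ 2 + kerrUζ m x y ^ 2) := by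
  have hr : (radius x y : ℂ) ≠ 0 := ofReal_ne_zero.2 (radius_pos hx y).ne'
  have hr2 : (radius x y : ℂ) ^ 2 = x ^ 2 + y ^ 2 := by exact_mod_cast sq_radius x y
  have hm' : (m : ℂ) ≠ 0 := ofReal_ne_zero.2 hm
  have hx' : (x : ℂ) ≠ 0 := ofReal_ne_zero.2 hx
  have hconj : conj (kerrU m x y) = radius x y / m - y / radius x y * I := by
    simp [kerrU, map_div₀]
    ring
  have hlap : kerrUρρ m x y + kerrUζζ m x y + kerrUρ m x y / x
      = 2 * conj (kerrU m x y) / radius x y ^ 2 := by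
    rw [hconj]
    simp only [kerrUρρ, kerrUζζ, kerrUρ]
    push_cast
    field_simp
    linear_combination ((y : ℂ) * m * I - (radius x y : ℂ) ^ 2) * hr2
  have hgrad : kerrUρ m x y ^ 2 + kerrUζ m x y ^ 2 = 1 / m ^ 2 - x ^ 2 / radius x y ^ 4 := by
    simp only [kerrUζ, kerrUρ]
    push_cast
    field_simp
    linear_combination ((x : ℂ) ^ 2 * m ^ 2 - (radius x y : ℂ) ^ 4) * hr2
      + ((x : ℂ) ^ 2 * m ^ 2 * y ^ 2 + (x : ℂ) ^ 4 * m ^ 2) * I_sq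
  rw [hlap, hgrad, hconj, kerrU]
  push_cast
  field_simp
  linear_combination ((m : ℂ) ^ 3 * y * I - (radius x y : ℂ) ^ 2 * m ^ 2) * hr2
    + (-(radius x y : ℂ) ^ 2 * m ^ 2 * y ^ 2 + (m : ℂ) ^ 3 * y ^ 3 * I) * I_sq

end

/-- Let `m > 0` and, for `ρ > 0` and `(ρ, ζ)` with `r = √(ρ² + ζ²)`, `r² ≠ mρ`,
let `f(ρ, ζ) = (ρ² + ζ² + m(iζ − r))/(ρ² + ζ² + m(iζ + r))` be the extreme
Kerr Ernst potential.  Then `f` satisfies the stationary axisymmetric Ernst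
equation `(Re f)·(f_ρρ + f_ζζ + f_ρ/ρ) = f_ρ² + f_ζ²`. -/
theorem stmt14 (m : ℝ) (hm : 0 < m) (f : ℝ → ℝ → ℂ)
    (hf : ∀ ρ ζ : ℝ, f ρ ζ =
      (((ρ^2 + ζ^2 : ℝ) : ℂ)
          + (m : ℂ)*(Complex.I*(ζ : ℂ) - (Real.sqrt (ρ^2 + ζ^2) : ℂ))) /
      (((ρ^2 + ζ^2 : ℝ) : ℂ)
          + (m : ℂ)*(Complex.I*(ζ : ℂ) + (Real.sqrt (ρ^2 + ζ^2) : ℂ)))) :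
    ∀ ρ ζ : ℝ, 0 < ρ → (Real.sqrt (ρ^2 + ζ^2))^2 ≠ m*ρ →
      (((f ρ ζ).re : ℂ)) *
        (deriv (fun x : ℝ => deriv (fun x' : ℝ => f x' ζ) x) ρ
          + deriv (fun y : ℝ => deriv (fun y' : ℝ => f ρ y') y) ζ
          + (deriv (fun x : ℝ => f x ζ) ρ) / (ρ : ℂ))
      = (deriv (fun x : ℝ => f x ζ) ρ)^2 + (deriv (fun y : ℝ => f ρ y) ζ)^2 := by
  intro ρ ζ hρ _
  have hfU : ∀ x y : ℝ, x ≠ 0 → f x y = cayley (kerrU m x y) := fun x y hx =>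
    (hf x y).trans (kerr_eq_cayley hm.ne' (radius_pos hx y))
  have hfρ : (fun x => f x ζ) =ᶠ[𝓝 ρ] fun x => cayley (kerrU m x ζ) :=
    (eventually_ne_nhds hρ.ne').mono fun x hx => hfU x ζ hx
  have hfζ : (fun y => f ρ y) = fun y => cayley (kerrU m ρ y) :=
    funext fun y => hfU ρ y hρ.ne'
  have hUρ : ∀ᶠ x in 𝓝 ρ, HasDerivAt (fun s => kerrU m s ζ) (kerrUρ m x ζ) x :=
    (eventually_ne_nhds hρ.ne').mono fun x hx => hasDerivAt_kerrU_fst (radius_pos hx ζ)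
  have hUζ : ∀ y, HasDerivAt (fun s => kerrU m ρ s) (kerrUζ m ρ y) y := fun y =>
    hasDerivAt_kerrU_snd (radius_pos hρ.ne' y)
  have hr := radius_pos hρ.ne' ζ
  have hU1 := kerrU_add_one_ne_zero hm hr
  rw [hfρ.deriv_eq, hfρ.deriv.deriv_eq, hfζ, hfU ρ ζ hρ.ne',
    (hasDerivAt_cayley_comp hUρ.self_of_nhds hU1).deriv,
    (hasDerivAt_cayley_comp (hUζ ζ) hU1).deriv,
    deriv_deriv_cayley_comp hUρ (hasDerivAt_kerrUρ_fst hm.ne' hr) hU1,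
    deriv_deriv_cayley_comp (.of_forall hUζ) (hasDerivAt_kerrUζ_snd hm.ne' hr) hU1]
  exact ernst_cayley_of_ernstXi hU1 (kerrU_ernstXi hm.ne' hρ.ne')
end

section
/- Let λ > 0 and define, for ρ > 0 and ζ > 0, U(ρ, ζ) = −(λ/(2π)) ∫_{−1}^{1} (1 − t²) · Re[((it − ζ)² + ρ²)^{−1/2}] dt, where the principal branch of the complex square root is used (the radicand ρ² + ζ² − t² − 2itζ never lies on the nonpositive real axis for ζ > 0). Then U satisfies the axisymmetric Laplace equation ∂²U/∂ρ² + (1/ρ)∂U/∂ρ + ∂²U/∂ζ² = 0 on the region ρ > 0, ζ > 0. -/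
/-!
For each `t`, `((it - ζ)² + ρ²)^(-1/2)` is the potential of a unit point source placed at the
complex point `ζ = it` of the symmetry axis, so it solves the axisymmetric Laplace equation.
Concretely, the radicand is `Q = u² + v` with `(u, v) = (ρ, (it - ζ)²)` or `(it - ζ, ρ²)`, so
both partial derivatives are derivatives of `u ↦ φ(u² + v)` with `φ(Q) = Q^(-1/2)`, and the
operator sends the kernel to `6 φ'(Q) + 4 Q φ''(Q) = 0`. For `ζ > 0` the radicand stays in the
slit plane, so the weighted integrands and their first two partial derivatives are jointly
continuous and the derivatives can be taken under the integral sign.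
-/

open Complex MeasureTheory Set Filter Topology Function

theorem ContinuousOn.continuous_of_uncurry {α β γ : Type*} [TopologicalSpace α]
    [TopologicalSpace β] [TopologicalSpace γ] {F : α → β → γ} {s : Set α}
    (hF : ContinuousOn (uncurry F) (s ×ˢ univ)) {x : α} (hx : x ∈ s) : Continuous (F x) :=
  hF.comp_continuous (continuous_const.prodMk continuous_id) fun t => ⟨hx, mem_univ t⟩

section ParametricIntegral

variable {E : Type*} [NormedAddCommGroup E] [NormedSpace ℝ E] {F F' F'' : ℝ → ℝ → E}
  {s : Set ℝ} {a b x₀ : ℝ}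

theorem hasDerivAt_intervalIntegral_of_continuousOn (hs : IsOpen s)
    (hF : ContinuousOn (uncurry F) (s ×ˢ univ)) (hF' : ContinuousOn (uncurry F') (s ×ˢ univ))
    (hderiv : ∀ t, ∀ x ∈ s, HasDerivAt (F · t) (F' x t) x) (hx₀ : x₀ ∈ s) :
    HasDerivAt (fun x => ∫ t in a..b, F x t) (∫ t in a..b, F' x₀ t) x₀ := by
  obtain ⟨ε, hε, hball⟩ : ∃ ε > 0, Metric.closedBall x₀ ε ⊆ s :=
    Metric.nhds_basis_closedBall.mem_iff.1 (hs.mem_nhds hx₀)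
  have hK : IsCompact (Metric.closedBall x₀ ε ×ˢ uIcc a b) :=
    (isCompact_closedBall x₀ ε).prod isCompact_uIcc
  obtain ⟨C, hC⟩ := hK.exists_bound_of_continuousOn (hF'.mono (prod_mono hball (subset_univ _)))
  refine (intervalIntegral.hasDerivAt_integral_of_dominated_loc_of_deriv_le (bound := fun _ => C)
    (Metric.ball_mem_nhds x₀ hε) ?_ ((hF.continuous_of_uncurry hx₀).intervalIntegrable _ _)
    (hF'.continuous_of_uncurry hx₀).aestronglyMeasurable ?_ intervalIntegrable_const ?_).2
  · exact eventually_of_mem (hs.mem_nhds hx₀) fun x hx =>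
      (hF.continuous_of_uncurry hx).aestronglyMeasurable
  · exact .of_forall fun t ht x hx =>
      hC (x, t) ⟨Metric.ball_subset_closedBall hx, uIoc_subset_uIcc ht⟩
  · exact .of_forall fun t _ x hx => hderiv t x (hball (Metric.ball_subset_closedBall hx))

theorem deriv_deriv_intervalIntegral_of_continuousOn (hs : IsOpen s)
    (hF : ContinuousOn (uncurry F) (s ×ˢ univ)) (hF' : ContinuousOn (uncurry F') (s ×ˢ univ))
    (hF'' : ContinuousOn (uncurry F'') (s ×ˢ univ))
    (hderiv : ∀ t, ∀ x ∈ s, HasDerivAt (F · t) (F' x t) x)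
    (hderiv' : ∀ t, ∀ x ∈ s, HasDerivAt (F' · t) (F'' x t) x) (hx₀ : x₀ ∈ s) :
    deriv (fun x => deriv (fun x' => ∫ t in a..b, F x' t) x) x₀ =
      ∫ t in a..b, F'' x₀ t := by
  have h : (fun x => deriv (fun x' => ∫ t in a..b, F x' t) x) =ᶠ[𝓝 x₀]
      fun x => ∫ t in a..b, F' x t :=
    eventually_of_mem (hs.mem_nhds hx₀) fun x hx =>
      (hasDerivAt_intervalIntegral_of_continuousOn hs hF hF' hderiv hx).deriv
  rw [h.deriv_eq]
  exact (hasDerivAt_intervalIntegral_of_continuousOn hs hF' hF'' hderiv' hx₀).deriv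

end ParametricIntegral

section InvSqrtSqAdd

variable {u v : ℂ}

noncomputable def invSqrtSqAdd (u v : ℂ) : ℂ := (u ^ 2 + v) ^ (-(1 / 2 : ℂ))

noncomputable def invSqrtSqAddDeriv (u v : ℂ) : ℂ := -u * (u ^ 2 + v) ^ (-(3 / 2 : ℂ))

noncomputable def invSqrtSqAddDeriv2 (u v : ℂ) : ℂ :=
  -(u ^ 2 + v) ^ (-(3 / 2 : ℂ)) + 3 * u ^ 2 * (u ^ 2 + v) ^ (-(5 / 2 : ℂ))

theorem invSqrtSqAdd_sq_comm (u w : ℂ) : invSqrtSqAdd u (w ^ 2) = invSqrtSqAdd w (u ^ 2) := by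
  rw [invSqrtSqAdd, invSqrtSqAdd, add_comm]

theorem hasDerivAt_invSqrtSqAdd (h : u ^ 2 + v ∈ slitPlane) :
    HasDerivAt (invSqrtSqAdd · v) (invSqrtSqAddDeriv u v) u := by
  refine (((hasDerivAt_pow 2 u).add_const v).cpow_const (c := -(1 / 2 : ℂ)) h).congr_deriv ?_
  rw [invSqrtSqAddDeriv, show -(1 / 2 : ℂ) - 1 = -(3 / 2) by norm_num]
  push_cast
  ring

theorem hasDerivAt_invSqrtSqAddDeriv (h : u ^ 2 + v ∈ slitPlane) :
    HasDerivAt (invSqrtSqAddDeriv · v) (invSqrtSqAddDeriv2 u v) u := by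
  refine ((hasDerivAt_neg u).mul
    (((hasDerivAt_pow 2 u).add_const v).cpow_const (c := -(3 / 2 : ℂ)) h)).congr_deriv ?_
  rw [invSqrtSqAddDeriv2, show -(3 / 2 : ℂ) - 1 = -(5 / 2) by norm_num]
  push_cast
  ring

theorem invSqrtSqAdd_axisymLaplace {x w : ℂ} (hx : x ≠ 0) (h : x ^ 2 + w ^ 2 ≠ 0) :
    invSqrtSqAddDeriv2 x (w ^ 2) + invSqrtSqAddDeriv x (w ^ 2) / x
      + invSqrtSqAddDeriv2 w (x ^ 2) = 0 := by
  have hpow : (x ^ 2 + w ^ 2) ^ (-(3 / 2 : ℂ)) =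
      (x ^ 2 + w ^ 2) ^ (-(5 / 2 : ℂ)) * (x ^ 2 + w ^ 2) := by
    rw [show -(3 / 2 : ℂ) = -(5 / 2) + 1 by norm_num, cpow_add _ _ h, cpow_one]
  rw [invSqrtSqAddDeriv2, invSqrtSqAddDeriv, invSqrtSqAddDeriv2, add_comm (w ^ 2), hpow]
  field_simp
  ring

def slitDomain : Set (ℂ × ℂ) := {q | q.1 ^ 2 + q.2 ∈ slitPlane}

theorem continuousOn_cpow_sq_add (c : ℂ) :
    ContinuousOn (fun q : ℂ × ℂ => (q.1 ^ 2 + q.2) ^ c) slitDomain :=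
  ContinuousOn.cpow_const (by fun_prop) fun _ hq => hq

theorem continuousOn_invSqrtSqAdd : ContinuousOn (uncurry invSqrtSqAdd) slitDomain :=
  continuousOn_cpow_sq_add _

theorem continuousOn_invSqrtSqAddDeriv : ContinuousOn (uncurry invSqrtSqAddDeriv) slitDomain :=
  continuous_fst.neg.continuousOn.mul (continuousOn_cpow_sq_add _)

theorem continuousOn_invSqrtSqAddDeriv2 : ContinuousOn (uncurry invSqrtSqAddDeriv2) slitDomain :=
  (continuousOn_cpow_sq_add _).neg.add
    ((continuous_const.mul (continuous_fst.pow 2)).continuousOn.mul (continuousOn_cpow_sq_add _))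

end InvSqrtSqAdd

noncomputable def axisymLaplacian (U : ℝ → ℝ → ℝ) (ρ ζ : ℝ) : ℝ :=
  deriv (fun x => deriv (fun x' => U x' ζ) x) ρ + deriv (fun x => U x ζ) ρ / ρ
    + deriv (fun y => deriv (fun y' => U ρ y') y) ζ

theorem axisymLaplacian_const_mul (c : ℝ) (U : ℝ → ℝ → ℝ) (ρ ζ : ℝ) :
    axisymLaplacian (fun ρ ζ => c * U ρ ζ) ρ ζ = c * axisymLaplacian U ρ ζ := by
  simp only [axisymLaplacian, deriv_const_mul_field']
  ring

section AxisPotential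

variable {w : ℝ → ℝ}

theorem sq_add_sq_mem_slitPlane (t ρ : ℝ) {ζ : ℝ} (hζ : 0 < ζ) :
    (I * t - ζ) ^ 2 + (ρ : ℂ) ^ 2 ∈ slitPlane := by
  rw [mem_slitPlane_iff]
  rcases eq_or_ne t 0 with rfl | ht
  · left
    simp only [sq, ofReal_zero, mul_zero, zero_sub, add_re, mul_re, neg_re, neg_im, ofReal_re,
      ofReal_im]
    nlinarith
  · right
    simp only [sq, add_im, mul_im, sub_re, sub_im, mul_re, I_re, I_im, ofReal_re, ofReal_im]
    intro him
    exact ht (by nlinarith [mul_pos hζ hζ] : t = 0)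

theorem ofReal_sq_add_sq_mem_slitPlane (t x : ℝ) {ζ : ℝ} (hζ : 0 < ζ) :
    (x : ℂ) ^ 2 + (I * t - ζ) ^ 2 ∈ slitPlane := by
  rw [add_comm]
  exact sq_add_sq_mem_slitPlane t x hζ

noncomputable def axisPotential (w : ℝ → ℝ) (a b ρ ζ : ℝ) : ℝ :=
  ∫ t in a..b, w t * (invSqrtSqAdd (I * t - ζ) (ρ ^ 2)).re

theorem continuousOn_mul_re_comp (hw : Continuous w) {φ : ℂ × ℂ → ℂ}
    (hφ : ContinuousOn φ slitDomain) {g : ℝ × ℝ → ℂ × ℂ} (hg : Continuous g)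
    {S : Set (ℝ × ℝ)} (hgS : MapsTo g S slitDomain) :
    ContinuousOn (fun p => w p.2 * (φ (g p)).re) S :=
  (hw.comp continuous_snd).continuousOn.mul
    (continuous_re.comp_continuousOn (hφ.comp hg.continuousOn hgS))

theorem continuousOn_radialIntegrand (hw : Continuous w) {φ : ℂ → ℂ → ℂ}
    (hφ : ContinuousOn (uncurry φ) slitDomain) {ζ : ℝ} (hζ : 0 < ζ) :
    ContinuousOn (uncurry fun (x t : ℝ) => w t * (φ x ((I * t - ζ) ^ 2)).re) (univ ×ˢ univ) :=
  continuousOn_mul_re_comp hw hφ (g := fun p => (p.1, (I * p.2 - ζ) ^ 2)) (by fun_prop)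
    fun p _ => ofReal_sq_add_sq_mem_slitPlane p.2 p.1 hζ

theorem continuousOn_axialIntegrand (hw : Continuous w) {φ : ℂ → ℂ → ℂ}
    (hφ : ContinuousOn (uncurry φ) slitDomain) (ρ : ℝ) :
    ContinuousOn (uncurry fun (y t : ℝ) => w t * (φ (I * t - y) (ρ ^ 2)).re)
      (Ioi 0 ×ˢ univ) :=
  continuousOn_mul_re_comp hw hφ (g := fun p => (I * p.2 - p.1, (ρ : ℂ) ^ 2)) (by fun_prop)
    fun p hp => sq_add_sq_mem_slitPlane p.2 ρ hp.1

theorem axisPotential_eq_radial (w : ℝ → ℝ) (a b ζ : ℝ) :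
    (fun x => axisPotential w a b x ζ) =
      fun x : ℝ => ∫ t in a..b, w t * (invSqrtSqAdd x ((I * t - ζ) ^ 2)).re := by
  funext x
  simp only [axisPotential, invSqrtSqAdd_sq_comm]

theorem hasDerivAt_axisPotential_radial (hw : Continuous w) (a b ρ : ℝ) {ζ : ℝ}
    (hζ : 0 < ζ) :
    HasDerivAt (fun x => axisPotential w a b x ζ)
      (∫ t in a..b, w t * (invSqrtSqAddDeriv ρ ((I * t - ζ) ^ 2)).re) ρ := by
  rw [axisPotential_eq_radial]
  exact hasDerivAt_intervalIntegral_of_continuousOn isOpen_univ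
    (continuousOn_radialIntegrand hw continuousOn_invSqrtSqAdd hζ)
    (continuousOn_radialIntegrand hw continuousOn_invSqrtSqAddDeriv hζ)
    (fun t x _ => (hasDerivAt_invSqrtSqAdd (ofReal_sq_add_sq_mem_slitPlane t x hζ)
      ).real_of_complex.const_mul (w t))
    (mem_univ ρ)

theorem deriv_deriv_axisPotential_radial (hw : Continuous w) (a b ρ : ℝ) {ζ : ℝ}
    (hζ : 0 < ζ) :
    deriv (fun x => deriv (fun x' => axisPotential w a b x' ζ) x) ρ =
      ∫ t in a..b, w t * (invSqrtSqAddDeriv2 ρ ((I * t - ζ) ^ 2)).re := by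
  rw [axisPotential_eq_radial]
  exact deriv_deriv_intervalIntegral_of_continuousOn isOpen_univ
    (continuousOn_radialIntegrand hw continuousOn_invSqrtSqAdd hζ)
    (continuousOn_radialIntegrand hw continuousOn_invSqrtSqAddDeriv hζ)
    (continuousOn_radialIntegrand hw continuousOn_invSqrtSqAddDeriv2 hζ)
    (fun t x _ => (hasDerivAt_invSqrtSqAdd (ofReal_sq_add_sq_mem_slitPlane t x hζ)
      ).real_of_complex.const_mul (w t))
    (fun t x _ => (hasDerivAt_invSqrtSqAddDeriv (ofReal_sq_add_sq_mem_slitPlane t x hζ)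
      ).real_of_complex.const_mul (w t))
    (mem_univ ρ)

theorem deriv_deriv_axisPotential_axial (hw : Continuous w) (a b ρ : ℝ) {ζ : ℝ}
    (hζ : 0 < ζ) :
    deriv (fun y => deriv (fun y' => axisPotential w a b ρ y') y) ζ =
      ∫ t in a..b, w t * (invSqrtSqAddDeriv2 (I * t - ζ) (ρ ^ 2)).re :=
  deriv_deriv_intervalIntegral_of_continuousOn isOpen_Ioi
    (continuousOn_axialIntegrand hw continuousOn_invSqrtSqAdd ρ)
    (continuousOn_axialIntegrand hw (φ := fun u v => -invSqrtSqAddDeriv u v)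
      continuousOn_invSqrtSqAddDeriv.neg ρ)
    (continuousOn_axialIntegrand hw continuousOn_invSqrtSqAddDeriv2 ρ)
    (fun t _ hy => ((hasDerivAt_invSqrtSqAdd (sq_add_sq_mem_slitPlane t ρ hy)).comp_const_sub
      _ _).real_of_complex.const_mul (w t))
    (fun t _ hy => (((hasDerivAt_invSqrtSqAddDeriv (sq_add_sq_mem_slitPlane t ρ hy)).neg
      |>.comp_const_sub _ _).real_of_complex.const_mul (w t)).congr_deriv (by rw [neg_neg]))
    hζ

theorem axisymLaplacian_axisPotential (hw : Continuous w) (a b : ℝ) {ρ ζ : ℝ} (hρ : 0 < ρ)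
    (hζ : 0 < ζ) : axisymLaplacian (axisPotential w a b) ρ ζ = 0 := by
  have radial_integrable {φ : ℂ → ℂ → ℂ} (hφ : ContinuousOn (uncurry φ) slitDomain) :
      IntervalIntegrable (fun t => w t * (φ ρ ((I * t - ζ) ^ 2)).re) volume a b :=
    ((continuousOn_radialIntegrand hw hφ hζ).continuous_of_uncurry
      (mem_univ ρ)).intervalIntegrable a b
  have axial_integrable :=
    ((continuousOn_axialIntegrand hw continuousOn_invSqrtSqAddDeriv2 ρ).continuous_of_uncurry
      (mem_Ioi.2 hζ)).intervalIntegrable (μ := volume) a b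
  have hK2 := radial_integrable continuousOn_invSqrtSqAddDeriv2
  have hK1 := (radial_integrable continuousOn_invSqrtSqAddDeriv).div_const ρ
  rw [axisymLaplacian, (hasDerivAt_axisPotential_radial hw a b ρ hζ).deriv,
    deriv_deriv_axisPotential_radial hw a b ρ hζ,
    deriv_deriv_axisPotential_axial hw a b ρ hζ, ← intervalIntegral.integral_div,
    ← intervalIntegral.integral_add hK2 hK1,
    ← intervalIntegral.integral_add (hK2.add hK1) axial_integrable]
  refine (intervalIntegral.integral_congr fun t _ => ?_).trans intervalIntegral.integral_zero
  have h := congrArg re (invSqrtSqAdd_axisymLaplace (ofReal_ne_zero.2 hρ.ne')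
    (slitPlane_ne_zero (ofReal_sq_add_sq_mem_slitPlane t ρ hζ)))
  simp only [add_re, div_ofReal_re, zero_re] at h
  linear_combination w t * h

end AxisPotential

theorem stmt16_general (lam : ℝ) (U : ℝ → ℝ → ℝ)
    (hU : ∀ ρ ζ : ℝ, U ρ ζ = -(lam/(2*Real.pi)) *
      ∫ t in (-1:ℝ)..(1:ℝ), (1 - t^2) *
        (((Complex.I*(t : ℂ) - (ζ : ℂ))^2 + ((ρ : ℂ))^2) ^ (-(1/2 : ℂ))).re) :
    ∀ ρ ζ : ℝ, 0 < ρ → 0 < ζ →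
      deriv (fun x : ℝ => deriv (fun x' : ℝ => U x' ζ) x) ρ
        + (deriv (fun x : ℝ => U x ζ) ρ) / ρ
        + deriv (fun y : ℝ => deriv (fun y' : ℝ => U ρ y') y) ζ = 0 := by
  intro ρ ζ hρ hζ
  obtain rfl : U = fun ρ ζ =>
      -(lam / (2 * Real.pi)) * axisPotential (fun t => 1 - t ^ 2) (-1) 1 ρ ζ :=
    funext₂ hU
  change axisymLaplacian (fun ρ ζ => _ * _) ρ ζ = 0
  rw [axisymLaplacian_const_mul, axisymLaplacian_axisPotential (by fun_prop) _ _ hρ hζ, mul_zero]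

/-- Newtonian (Maclaurin) limit: let `λ > 0` and define, for `ρ > 0`, `ζ > 0`,
`U(ρ, ζ) = −(λ/(2π)) ∫_{−1}^{1} (1 − t²)·Re[((it − ζ)² + ρ²)^{−1/2}] dt`,
using the principal branch of the complex power.  Then `U` satisfies the
axisymmetric Laplace equation `U_ρρ + U_ρ/ρ + U_ζζ = 0` on `ρ > 0, ζ > 0`. -/
theorem stmt16 (lam : ℝ) (hlam : 0 < lam) (U : ℝ → ℝ → ℝ)
    (hU : ∀ ρ ζ : ℝ, U ρ ζ = -(lam/(2*Real.pi)) *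
      ∫ t in (-1:ℝ)..(1:ℝ), (1 - t^2) *
        (((Complex.I*(t : ℂ) - (ζ : ℂ))^2 + ((ρ : ℂ))^2) ^ (-(1/2 : ℂ))).re) :
    ∀ ρ ζ : ℝ, 0 < ρ → 0 < ζ →
      deriv (fun x : ℝ => deriv (fun x' : ℝ => U x' ζ) x) ρ
        + (deriv (fun x : ℝ => U x ζ) ρ) / ρ
        + deriv (fun y : ℝ => deriv (fun y' : ℝ => U ρ y') y) ζ = 0 :=
  stmt16_general lam U hU
end
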